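/- arXiv:1210.2761 — 4 statements merged into one kernel-verified Lean document; each statement's English description precedes it below -/
import Mathlib

section
/- Let z > 2 be a real number and let a ∈ (0,1). Then the pressure exerted by an adsorbing directed path on the adsorbing line at the point 2⌊an/2⌋ tends, as n → ∞ through even values, to −log(z−1); that is, lim_{n→∞, n even} P_n^T(z; 2⌊an/2⌋) = −log(z−1). -/
open Filter Real

/-- Partition function of adsorbing Dyck paths of length `2ν`:
`D_{2ν}(z) = Σ_{m=0}^{ν} ((2m+1)/(ν+m+1))·C(2ν, ν+m)·(z−1)^m`. -/
noncomputable def Dp (ν : ℕ) (z : ℝ) : ℝ :=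
  ∑ m ∈ Finset.range (ν + 1),
    ((2 * (m : ℝ) + 1) / ((ν : ℝ) + m + 1)) * (Nat.choose (2 * ν) (ν + m)) * (z - 1) ^ m

/-- Partition function of adsorbing directed paths of length `2ν`:
`T_{2ν}(z) = Σ_{m=0}^{ν} C(2ν, ν+m)·(z−1)^m`. -/
noncomputable def Tp (ν : ℕ) (z : ℝ) : ℝ :=
  ∑ m ∈ Finset.range (ν + 1), (Nat.choose (2 * ν) (ν + m) : ℝ) * (z - 1) ^ m

/-- Pressure of an adsorbing Dyck path of length `n = 2ν` at the point `q = 2κ`: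
`P_n^D(z;q) = log(1 − D_q(z)·D_{n−q}(z)/D_n(z))`. -/
noncomputable def PD (ν κ : ℕ) (z : ℝ) : ℝ :=
  Real.log (1 - Dp κ z * Dp (ν - κ) z / Dp ν z)

/-- Pressure of an adsorbing directed path of length `n = 2ν` at the point `q = 2κ`:
`P_n^T(z;q) = log(1 − D_q(z)·T_{n−q}(z)/T_n(z))`. -/
noncomputable def PT (ν κ : ℕ) (z : ℝ) : ℝ :=
  Real.log (1 - Dp κ z * Tp (ν - κ) z / Tp ν z)

noncomputable def Aq (ν : ℕ) (x : ℝ) : ℝ :=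
  ∑ j ∈ Finset.range (ν + 1), (Nat.choose (2 * ν) j : ℝ) * x ^ j

lemma one_le_Aq (ν : ℕ) {x : ℝ} (hx : 0 ≤ x) : 1 ≤ Aq ν x := by
  unfold Aq
  rw [Finset.sum_range_succ']
  have h0 : ((Nat.choose (2*ν) 0 : ℝ)) * x ^ 0 = 1 := by simp
  rw [h0]
  have : 0 ≤ ∑ i ∈ Finset.range ν, (Nat.choose (2*ν) (i+1) : ℝ) * x ^ (i+1) := by
    apply Finset.sum_nonneg; intro i _; positivity
  linarith

lemma Tp_eq_Aq (ν : ℕ) {z : ℝ} (hz : z - 1 ≠ 0) :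
    Tp ν z = (z - 1) ^ ν * Aq ν (z - 1)⁻¹ := by
  have h1 : Aq ν (z-1)⁻¹ =
      ∑ m ∈ Finset.range (ν+1), (Nat.choose (2*ν) (ν - m) : ℝ) * ((z-1)⁻¹) ^ (ν - m) := by
    unfold Aq
    rw [← Finset.sum_range_reflect]
    apply Finset.sum_congr rfl
    intro j _
    have h2 : ν + 1 - 1 - j = ν - j := by omega
    rw [h2]
  rw [h1, Finset.mul_sum, Tp]
  apply Finset.sum_congr rfl
  intro m hm
  have hm' : m ≤ ν := by simpa [Nat.lt_succ_iff] using hm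
  have hc : Nat.choose (2*ν) (ν - m) = Nat.choose (2*ν) (ν + m) := by
    have h := Nat.choose_symm (n := 2*ν) (k := ν + m) (by omega)
    have h3 : 2*ν - (ν + m) = ν - m := by omega
    rw [h3] at h
    exact h
  rw [hc]
  have hp : (z-1)^ν * ((z-1)⁻¹) ^ (ν - m) = (z-1)^m := by
    rw [inv_pow, mul_inv_eq_iff_eq_mul₀ (pow_ne_zero _ hz), ← pow_add]
    congr 1; omega
  linear_combination (-(Nat.choose (2*ν) (ν+m) : ℝ)) * hp

lemma Dp_eq_Tp (ν : ℕ) (z : ℝ) :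
    (z - 1) * Dp ν z = (z - 2) * Tp ν z + (Nat.choose (2 * ν) ν : ℝ) := by
  have key : (z - 1) * (Tp ν z - Dp ν z) = Tp ν z - (Nat.choose (2*ν) ν : ℝ) := by
    have hL : (z - 1) * (Tp ν z - Dp ν z) =
        ∑ m ∈ Finset.range (ν+1), (Nat.choose (2*ν) (ν + (m+1)) : ℝ) * (z-1)^(m+1) := by
      unfold Tp Dp
      rw [← Finset.sum_sub_distrib, Finset.mul_sum]
      apply Finset.sum_congr rfl
      intro m hm
      have hm' : m ≤ ν := by simpa [Nat.lt_succ_iff] using hm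
      have hd : ((ν : ℝ) + m + 1) ≠ 0 := by positivity
      have hcast : ((Nat.choose (2*ν) (ν+m+1) : ℝ)) * ((ν : ℝ) + m + 1)
          = (Nat.choose (2*ν) (ν+m) : ℝ) * ((ν : ℝ) - m) := by
        have h := Nat.choose_succ_right_eq (2*ν) (ν+m)
        have h2 : 2*ν - (ν+m) = ν - m := by omega
        rw [h2] at h
        have := congrArg (Nat.cast : ℕ → ℝ) h
        push_cast [Nat.cast_sub hm'] at this
        convert this using 2 <;> ring
      have h3 : ν + (m+1) = ν + m + 1 := by omega
      rw [h3]
      field_simp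
      linear_combination (-(z-1)^(m+1)) * hcast
    rw [hL]
    have hg : ∀ m : ℕ, (Nat.choose (2*ν) (ν + m) : ℝ) * (z-1)^m =
        (fun m => (Nat.choose (2*ν) (ν + m) : ℝ) * (z-1)^m) m := fun _ => rfl
    rw [show (∑ m ∈ Finset.range (ν+1), (Nat.choose (2*ν) (ν + (m+1)) : ℝ) * (z-1)^(m+1))
        = (∑ m ∈ Finset.range (ν+2), (Nat.choose (2*ν) (ν + m) : ℝ) * (z-1)^m)
          - (Nat.choose (2*ν) (ν+0) : ℝ) * (z-1)^0 from by
      rw [Finset.sum_range_succ' (fun m => (Nat.choose (2*ν) (ν + m) : ℝ) * (z-1)^m) (ν+1)]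
      ring]
    rw [Finset.sum_range_succ]
    have hz0 : Nat.choose (2*ν) (ν + (ν+1)) = 0 := Nat.choose_eq_zero_of_lt (by omega)
    rw [hz0]
    simp [Tp]
  linarith

lemma binom_expand (ν : ℕ) (x : ℝ) :
    (1 + x) ^ (2*ν) = ∑ j ∈ Finset.range (2*ν+1), (Nat.choose (2*ν) j : ℝ) * x ^ j := by
  rw [add_comm, add_pow]
  apply Finset.sum_congr rfl
  intro j _
  simp [mul_comm]

lemma Aq_le (ν : ℕ) {x : ℝ} (hx : 0 ≤ x) : Aq ν x ≤ (1 + x) ^ (2*ν) := by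
  rw [binom_expand]
  apply Finset.sum_le_sum_of_subset_of_nonneg
  · exact Finset.range_subset_range.mpr (by omega)
  · intro i _ _; positivity

lemma le_Aq (ν : ℕ) {x : ℝ} (hx : 0 < x) (hx1 : x ≤ 1) :
    (1 + x) ^ (2*ν) - x * (4*x) ^ ν ≤ Aq ν x := by
  have hsplit : (1+x)^(2*ν) = Aq ν x + ∑ j ∈ Finset.Ico (ν+1) (2*ν+1), (Nat.choose (2*ν) j : ℝ) * x ^ j := by
    rw [binom_expand, Finset.range_eq_Ico,
      ← Finset.sum_Ico_consecutive _ (Nat.zero_le (ν+1)) (by omega : ν+1 ≤ 2*ν+1)]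
    rw [Aq, Finset.range_eq_Ico]
  have htail : ∑ j ∈ Finset.Ico (ν+1) (2*ν+1), (Nat.choose (2*ν) j : ℝ) * x ^ j
      ≤ x * (4*x) ^ ν := by
    have h1 : ∑ j ∈ Finset.Ico (ν+1) (2*ν+1), (Nat.choose (2*ν) j : ℝ) * x ^ j
        ≤ ∑ j ∈ Finset.Ico (ν+1) (2*ν+1), (Nat.choose (2*ν) j : ℝ) * x ^ (ν+1) := by
      apply Finset.sum_le_sum
      intro j hj
      have hj' : ν + 1 ≤ j := (Finset.mem_Ico.mp hj).1
      have := pow_le_pow_of_le_one hx.le hx1 hj'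
      have hc : (0:ℝ) ≤ (Nat.choose (2*ν) j : ℝ) := by positivity
      exact mul_le_mul_of_nonneg_left this hc
    have h2 : ∑ j ∈ Finset.Ico (ν+1) (2*ν+1), (Nat.choose (2*ν) j : ℝ) * x ^ (ν+1)
        ≤ (4:ℝ)^ν * x ^ (ν+1) := by
      rw [← Finset.sum_mul]
      apply mul_le_mul_of_nonneg_right _ (by positivity)
      have hsub : ∑ j ∈ Finset.Ico (ν+1) (2*ν+1), (Nat.choose (2*ν) j : ℝ)
          ≤ ∑ j ∈ Finset.range (2*ν+1), (Nat.choose (2*ν) j : ℝ) := by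
        apply Finset.sum_le_sum_of_subset_of_nonneg
        · rw [Finset.range_eq_Ico]; exact Finset.Ico_subset_Ico (by omega) le_rfl
        · intro i _ _; positivity
      have hfull : ∑ j ∈ Finset.range (2*ν+1), (Nat.choose (2*ν) j : ℝ) = (4:ℝ)^ν := by
        rw [← Nat.cast_sum]
        rw [Nat.sum_range_choose]
        push_cast [pow_mul]
        norm_num
      linarith
    have h3 : (4:ℝ)^ν * x^(ν+1) = x * (4*x)^ν := by
      rw [mul_pow, pow_succ]; ring
    linarith
  linarith

lemma aseq_tendsto {x : ℝ} (hx : 0 < x) (hx1 : x < 1) :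
    Tendsto (fun ν : ℕ => Aq ν x / (1+x)^(2*ν)) atTop (nhds 1) := by
  set r : ℝ := 4*x/(1+x)^2 with hr
  have hp : ∀ ν : ℕ, (0:ℝ) < (1+x)^(2*ν) := fun ν => by positivity
  have hr0 : 0 ≤ r := by positivity
  have hr1 : r < 1 := by
    rw [hr, div_lt_one (by positivity)]
    nlinarith
  have hkey : ∀ ν : ℕ, x * r^ν * (1+x)^(2*ν) = x * (4*x)^ν := by
    intro ν
    rw [hr, div_pow, pow_mul]
    field_simp
  have hlow : ∀ ν : ℕ, 1 - x * r^ν ≤ Aq ν x / (1+x)^(2*ν) := by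
    intro ν
    rw [le_div_iff₀ (hp ν), sub_mul, one_mul, hkey ν]
    have := le_Aq ν hx hx1.le
    linarith
  have hup : ∀ ν : ℕ, Aq ν x / (1+x)^(2*ν) ≤ 1 := by
    intro ν
    rw [div_le_one (hp ν)]
    exact Aq_le ν hx.le
  have hl : Tendsto (fun ν : ℕ => 1 - x * r^ν) atTop (nhds 1) := by
    have h0 : Tendsto (fun ν : ℕ => x * r^ν) atTop (nhds 0) := by
      have := (tendsto_pow_atTop_nhds_zero_of_lt_one hr0 hr1).const_mul x
      simpa using this
    have h1 : Tendsto (fun _ : ℕ => (1:ℝ)) atTop (nhds 1) := tendsto_const_nhds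
    have := h1.sub h0
    simpa using this
  exact tendsto_of_tendsto_of_tendsto_of_le_of_le hl tendsto_const_nhds hlow hup

lemma central_le (κ : ℕ) : ((Nat.choose (2*κ) κ : ℝ)) ≤ 4^κ := by
  have h : Nat.choose (2*κ) κ ≤ 4^κ := by
    calc Nat.choose (2*κ) κ ≤ ∑ i ∈ Finset.range (2*κ+1), Nat.choose (2*κ) i := by
          apply Finset.single_le_sum (f := fun i => Nat.choose (2*κ) i)
          · intro i _; exact Nat.zero_le _
          · simp [Finset.mem_range]; omega
      _ = 2^(2*κ) := Nat.sum_range_choose (2*κ)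
      _ = 4^κ := by rw [pow_mul]; norm_num
  calc ((Nat.choose (2*κ) κ : ℝ)) ≤ ((4^κ : ℕ) : ℝ) := by exact_mod_cast h
    _ = 4^κ := by push_cast; ring

lemma cseq_tendsto {x : ℝ} (hx : 0 < x) (hx1 : x < 1) :
    Tendsto (fun κ : ℕ => (Nat.choose (2*κ) κ : ℝ) * x^κ / (1+x)^(2*κ)) atTop (nhds 0) := by
  set r : ℝ := 4*x/(1+x)^2 with hr
  have hr0 : 0 ≤ r := by positivity
  have hr1 : r < 1 := by
    rw [hr, div_lt_one (by positivity)]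
    nlinarith
  have hub : ∀ κ : ℕ, (Nat.choose (2*κ) κ : ℝ) * x^κ / (1+x)^(2*κ) ≤ r^κ := by
    intro κ
    rw [div_le_iff₀ (by positivity), hr, div_pow, pow_mul]
    have h4 : (0:ℝ) < ((1+x)^2)^κ := by positivity
    rw [div_mul_cancel₀ _ (ne_of_gt h4), mul_pow]
    exact mul_le_mul_of_nonneg_right (central_le κ) (by positivity)
  have hlb : ∀ κ : ℕ, (0:ℝ) ≤ (Nat.choose (2*κ) κ : ℝ) * x^κ / (1+x)^(2*κ) := by
    intro κ; positivity
  exact tendsto_of_tendsto_of_tendsto_of_le_of_le tendsto_const_nhds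
    (tendsto_pow_atTop_nhds_zero_of_lt_one hr0 hr1) hlb hub

/-- For `z > 2` and `a ∈ (0,1)`, the pressure of an adsorbing directed path at the point
`2⌊an/2⌋` tends, as `n → ∞` through even values `n = 2ν`, to `−log(z−1)`. -/
theorem directed_pressure_adsorbed (z : ℝ) (hz : 2 < z) (a : ℝ) (ha0 : 0 < a) (ha1 : a < 1) :
    Tendsto (fun ν : ℕ => PT ν ⌊a * (ν : ℝ)⌋₊ z) atTop (nhds (-Real.log (z - 1))) := by
  simp only [PT]
  have hw : (1:ℝ) < z - 1 := by linarith
  have hwpos : (0:ℝ) < z - 1 := by linarith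
  have hw0 : z - 1 ≠ 0 := ne_of_gt hwpos
  set x : ℝ := (z-1)⁻¹ with hxdef
  have hx : 0 < x := inv_pos.mpr hwpos
  have hx1 : x < 1 := by
    rw [hxdef, inv_lt_one_iff₀]; right; exact hw
  set κf : ℕ → ℕ := fun ν => ⌊a * (ν : ℝ)⌋₊ with hκf
  have hκle : ∀ ν, κf ν ≤ ν := by
    intro ν
    have h1 : a * (ν:ℝ) ≤ (ν:ℝ) := by nlinarith [Nat.cast_nonneg (α := ℝ) ν]
    calc κf ν ≤ ⌊((ν:ℕ):ℝ)⌋₊ := Nat.floor_le_floor h1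
      _ = ν := Nat.floor_natCast ν
  have hκtop : Tendsto κf atTop atTop := by
    apply tendsto_nat_floor_atTop.comp
    exact Tendsto.const_mul_atTop ha0 tendsto_natCast_atTop_atTop
  have hdiff : Tendsto (fun ν => ν - κf ν) atTop atTop := by
    rw [tendsto_atTop]
    intro b
    have hev : ∀ᶠ ν : ℕ in atTop, (b:ℝ) ≤ (1-a) * (ν:ℝ) := by
      have : Tendsto (fun ν : ℕ => (1-a) * (ν:ℝ)) atTop atTop :=
        Tendsto.const_mul_atTop (by linarith) tendsto_natCast_atTop_atTop
      exact this.eventually_ge_atTop _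
    filter_upwards [hev] with ν hν
    have hfl : ((κf ν : ℕ):ℝ) ≤ a * ν := Nat.floor_le (by positivity)
    have : ((κf ν + b : ℕ) : ℝ) ≤ (ν : ℝ) := by push_cast; linarith
    have hle : κf ν + b ≤ ν := by exact_mod_cast this
    omega
  have hApos : ∀ μ : ℕ, 0 < Aq μ x := fun μ => lt_of_lt_of_le one_pos (one_le_Aq μ hx.le)
  have hppos : ∀ μ : ℕ, (0:ℝ) < (1+x)^(2*μ) := fun μ => by positivity
  -- the key algebraic identity
  have hQ : ∀ ν : ℕ, Dp (κf ν) z * Tp (ν - κf ν) z / Tp ν z =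
      ((z-2) * (Aq (κf ν) x / (1+x)^(2*(κf ν))) * (Aq (ν - κf ν) x / (1+x)^(2*(ν - κf ν)))
        + ((Nat.choose (2*(κf ν)) (κf ν) : ℝ) * x^(κf ν) / (1+x)^(2*(κf ν)))
          * (Aq (ν - κf ν) x / (1+x)^(2*(ν - κf ν))))
      / ((z-1) * (Aq ν x / (1+x)^(2*ν))) := by
    intro ν
    set κ := κf ν with hκ
    set μ := ν - κf ν with hμ
    have hκμ : κ + μ = ν := by
      have := hκle ν; omega
    have hD : Dp κ z = ((z-2) * Tp κ z + (Nat.choose (2*κ) κ : ℝ)) / (z-1) := by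
      rw [eq_div_iff hw0, mul_comm]
      exact Dp_eq_Tp κ z
    have e1 : (z-1)^ν = (z-1)^κ * (z-1)^μ := by rw [← pow_add, hκμ]
    have e2 : (1+x)^(2*ν) = (1+x)^(2*κ) * (1+x)^(2*μ) := by
      rw [← pow_add]; congr 1; omega
    have e3 : x^κ * (z-1)^κ = 1 := by
      rw [hxdef, inv_pow, inv_mul_cancel₀ (pow_ne_zero _ hw0)]
    have ex : x^κ = ((z-1)^κ)⁻¹ := by rw [hxdef, inv_pow]
    rw [hD, Tp_eq_Aq κ hw0, Tp_eq_Aq μ hw0, Tp_eq_Aq ν hw0, ← hxdef, e1, e2, ex]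
    have hAκ := hApos κ; have hAμ := hApos μ; have hAν := hApos ν
    have hpκ := hppos κ; have hpμ := hppos μ
    field_simp
  -- limits
  have hA1 : Tendsto (fun ν : ℕ => Aq ν x / (1+x)^(2*ν)) atTop (nhds 1) := aseq_tendsto hx hx1
  have hF1 : Tendsto (fun ν : ℕ => Aq (κf ν) x / (1+x)^(2*(κf ν))) atTop (nhds 1) :=
    hA1.comp hκtop
  have hF2 : Tendsto (fun ν : ℕ => Aq (ν - κf ν) x / (1+x)^(2*(ν - κf ν))) atTop (nhds 1) :=
    hA1.comp hdiff
  have hF3 : Tendsto (fun ν : ℕ => (Nat.choose (2*(κf ν)) (κf ν) : ℝ) * x^(κf ν) / (1+x)^(2*(κf ν)))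
      atTop (nhds 0) := (cseq_tendsto hx hx1).comp hκtop
  have hnum : Tendsto (fun ν : ℕ =>
      (z-2) * (Aq (κf ν) x / (1+x)^(2*(κf ν))) * (Aq (ν - κf ν) x / (1+x)^(2*(ν - κf ν)))
        + ((Nat.choose (2*(κf ν)) (κf ν) : ℝ) * x^(κf ν) / (1+x)^(2*(κf ν)))
          * (Aq (ν - κf ν) x / (1+x)^(2*(ν - κf ν)))) atTop (nhds (z-2)) := by
    have := ((hF1.const_mul (z-2)).mul hF2).add (hF3.mul hF2)
    simpa using this
  have hden : Tendsto (fun ν : ℕ => (z-1) * (Aq ν x / (1+x)^(2*ν))) atTop (nhds (z-1)) := by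
    have := hA1.const_mul (z-1)
    simpa using this
  have hQlim : Tendsto (fun ν : ℕ => Dp (κf ν) z * Tp (ν - κf ν) z / Tp ν z) atTop
      (nhds ((z-2)/(z-1))) := by
    have := hnum.div hden hw0
    exact Tendsto.congr (fun ν => (hQ ν).symm) this
  have harg : Tendsto (fun ν : ℕ => 1 - Dp (κf ν) z * Tp (ν - κf ν) z / Tp ν z) atTop
      (nhds ((z-1)⁻¹)) := by
    have h1 : Tendsto (fun _ : ℕ => (1:ℝ)) atTop (nhds 1) := tendsto_const_nhds
    have := h1.sub hQlim
    have hval : (1:ℝ) - (z-2)/(z-1) = (z-1)⁻¹ := by field_simp; ring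
    rwa [hval] at this
  have hlog := harg.log (inv_ne_zero hw0)
  rw [Real.log_inv] at hlog
  exact hlog
end

section
/- For every real z > 2 and every nonnegative integer ν, the adsorbing Dyck path partition function satisfies the two-sided bound ((z−2)/(z−1))·(z²/(z−1))^ν ≤ D_{2ν}(z) ≤ ((z−2)/(z−1))·(z²/(z−1))^ν · (1 + (z(z−1)/(z−2)³)·(4(z−1)/z²)^ν). -/
open Filter Real

lemma dyck_coeff_eq (ν m : ℕ) (hm : m ≤ ν) :
    ((2 * (m : ℝ) + 1) / ((ν : ℝ) + m + 1)) * (Nat.choose (2 * ν) (ν + m)) =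
    (Nat.choose (2 * ν) (ν + m) : ℝ) - (Nat.choose (2 * ν) (ν + m + 1) : ℝ) := by
  have h := Nat.choose_succ_right_eq (2 * ν) (ν + m)
  have h2 : 2 * ν - (ν + m) = ν - m := by omega
  rw [h2] at h
  have hc : (Nat.choose (2 * ν) (ν + m + 1) : ℝ) * ((ν : ℝ) + m + 1) =
      (Nat.choose (2 * ν) (ν + m) : ℝ) * ((ν : ℝ) - m) := by
    have := congrArg (Nat.cast : ℕ → ℝ) h
    push_cast [Nat.cast_sub hm] at this
    convert this using 2
  have hne : ((ν : ℝ) + m + 1) ≠ 0 := by positivity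
  field_simp
  nlinarith [hc]

lemma dyck_tDp (z : ℝ) (ν : ℕ) :
    (z - 1) * Dp ν z = (z - 2) * Tp ν z + (Nat.choose (2 * ν) ν : ℝ) := by
  set f : ℕ → ℝ := fun m => (Nat.choose (2 * ν) (ν + m) : ℝ) * (z - 1) ^ m with hf
  have hD : Dp ν z = ∑ m ∈ Finset.range (ν + 1),
      (((Nat.choose (2 * ν) (ν + m) : ℝ) - (Nat.choose (2 * ν) (ν + m + 1) : ℝ)) * (z - 1) ^ m) := by
    unfold Dp
    exact Finset.sum_congr rfl fun m hm =>
      by rw [dyck_coeff_eq ν m (Nat.lt_succ_iff.mp (Finset.mem_range.mp hm))]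
  have hftop : f (ν + 1) = 0 := by
    simp only [hf]
    rw [Nat.choose_eq_zero_of_lt (by omega)]
    simp
  have h1 := Finset.sum_range_succ' f (ν + 1)
  have h2 := Finset.sum_range_succ f (ν + 1)
  have hT : Tp ν z = ∑ m ∈ Finset.range (ν + 1), f m := rfl
  have hshift : ∑ m ∈ Finset.range (ν + 1), f (m + 1) = Tp ν z - f 0 := by
    rw [h2, hftop] at h1
    rw [hT]; linarith
  have hsplit : (z - 1) * Dp ν z
      = (z - 1) * Tp ν z - ∑ m ∈ Finset.range (ν + 1), f (m + 1) := by
    rw [hD, hT, Finset.mul_sum, Finset.mul_sum, ← Finset.sum_sub_distrib]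
    refine Finset.sum_congr rfl fun m hm => ?_
    simp only [hf]
    ring
  rw [hsplit, hshift]
  have : f 0 = (Nat.choose (2 * ν) ν : ℝ) := by simp [hf]
  rw [this]; ring

lemma dyck_expand (z : ℝ) (ν : ℕ) :
    z ^ (2 * ν) = (∑ k ∈ Finset.range ν, (Nat.choose (2 * ν) k : ℝ) * (z - 1) ^ k)
      + (z - 1) ^ ν * Tp ν z := by
  have hb : z ^ (2 * ν) = ∑ k ∈ Finset.range (2 * ν + 1),
      (Nat.choose (2 * ν) k : ℝ) * (z - 1) ^ k := by
    have h := add_pow (z - 1) 1 (2 * ν)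
    simp only [one_pow, mul_one] at h
    have : z - 1 + 1 = z := by ring
    rw [this] at h
    rw [h]
    exact Finset.sum_congr rfl fun k _ => by ring
  rw [hb, Finset.range_eq_Ico,
    ← Finset.sum_Ico_consecutive _ (Nat.zero_le ν) (by omega : ν ≤ 2 * ν + 1)]
  congr 1
  · rw [Finset.range_eq_Ico]
  rw [Finset.sum_Ico_eq_sum_range]
  have hn : 2 * ν + 1 - ν = ν + 1 := by omega
  rw [hn, Tp, Finset.mul_sum]
  exact Finset.sum_congr rfl fun k _ => by rw [pow_add]; ring

lemma dyck_central_le (ν : ℕ) : (Nat.choose (2 * ν) ν : ℝ) ≤ 4 ^ ν := by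
  have h : Nat.choose (2 * ν) ν ≤ 4 ^ ν := by
    calc Nat.choose (2 * ν) ν
        ≤ ∑ i ∈ Finset.range (2 * ν + 1), Nat.choose (2 * ν) i :=
          Finset.single_le_sum (fun i _ => Nat.zero_le _)
            (Finset.mem_range.mpr (by omega))
      _ = 2 ^ (2 * ν) := Nat.sum_range_choose (2 * ν)
      _ = 4 ^ ν := by rw [pow_mul]; norm_num
  exact_mod_cast h

/-- Two-sided bound for the adsorbing Dyck path partition function for `z > 2`. -/
theorem dyck_partition_bounds (z : ℝ) (hz : 2 < z) (ν : ℕ) :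
    ((z - 2) / (z - 1)) * (z ^ 2 / (z - 1)) ^ ν ≤ Dp ν z ∧
    Dp ν z ≤ ((z - 2) / (z - 1)) * (z ^ 2 / (z - 1)) ^ ν *
      (1 + (z * (z - 1) / (z - 2) ^ 3) * (4 * (z - 1) / z ^ 2) ^ ν) := by
  have ht : (1 : ℝ) < z - 1 := by linarith
  have ht0 : (0 : ℝ) < z - 1 := by linarith
  have hs : (0 : ℝ) < z - 2 := by linarith
  have hz0 : (0 : ℝ) < z := by linarith
  have hP : (0 : ℝ) < (z - 1) ^ ν := pow_pos ht0 ν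
  have h4 : (0 : ℝ) < 4 ^ ν := pow_pos (by norm_num) ν
  set a0 : ℝ := (Nat.choose (2 * ν) ν : ℝ) with ha0
  have ha0nn : 0 ≤ a0 := by positivity
  have ha0le : a0 ≤ 4 ^ ν := dyck_central_le ν
  set L : ℝ := ∑ k ∈ Finset.range ν, (Nat.choose (2 * ν) k : ℝ) * (z - 1) ^ k with hLdef
  have h1 : (z - 1) * Dp ν z = (z - 2) * Tp ν z + a0 := dyck_tDp z ν
  have h2 : z ^ (2 * ν) = L + (z - 1) ^ ν * Tp ν z := dyck_expand z ν
  have hQ : (z ^ 2) ^ ν = z ^ (2 * ν) := (pow_mul z 2 ν).symm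
  have hL0 : 0 ≤ L := by
    apply Finset.sum_nonneg
    intro k _
    positivity
  have hL1 : (z - 2) * L ≤ a0 * ((z - 1) ^ ν - 1) := by
    have hle : L ≤ a0 * ∑ k ∈ Finset.range ν, (z - 1) ^ k := by
      rw [Finset.mul_sum]
      refine Finset.sum_le_sum fun k _ => ?_
      have hck : (Nat.choose (2 * ν) k : ℝ) ≤ a0 := by
        rw [ha0]
        exact_mod_cast (by simpa [Nat.mul_div_cancel_left ν (by norm_num : 0 < 2)] using
          Nat.choose_le_middle k (2 * ν))
      exact mul_le_mul_of_nonneg_right hck (by positivity)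
    have hgeom : (∑ k ∈ Finset.range ν, (z - 1) ^ k) * ((z - 1) - 1) = (z - 1) ^ ν - 1 :=
      geom_sum_mul (z - 1) ν
    calc (z - 2) * L ≤ (z - 2) * (a0 * ∑ k ∈ Finset.range ν, (z - 1) ^ k) :=
          mul_le_mul_of_nonneg_left hle hs.le
      _ = a0 * ((∑ k ∈ Finset.range ν, (z - 1) ^ k) * ((z - 1) - 1)) := by ring
      _ = a0 * ((z - 1) ^ ν - 1) := by rw [hgeom]
  constructor
  · -- lower bound
    have key : (z - 2) * z ^ (2 * ν) ≤ ((z - 1) * Dp ν z) * (z - 1) ^ ν := by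
      rw [h1, h2]
      nlinarith [hL1, ha0nn]
    rw [div_pow, div_mul_div_comm, div_le_iff₀ (by positivity)]
    calc (z - 2) * (z ^ 2) ^ ν = (z - 2) * z ^ (2 * ν) := by rw [hQ]
      _ ≤ ((z - 1) * Dp ν z) * (z - 1) ^ ν := key
      _ = Dp ν z * ((z - 1) * (z - 1) ^ ν) := by ring
  · -- upper bound
    have ha04 : a0 * (z - 2) ^ 2 ≤ z * (z - 1) * 4 ^ ν := by
      nlinarith [mul_nonneg (sub_nonneg.mpr ha0le) (sq_nonneg (z - 2)),
        mul_pos h4 (show (0:ℝ) < 3 * z - 4 by linarith)]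
    have key2 : ((z - 2) * Tp ν z + a0) * ((z - 1) ^ ν * (z - 2) ^ 2)
        ≤ (z - 2) ^ 3 * z ^ (2 * ν) + z * 4 ^ ν * (z - 1) * (z - 1) ^ ν := by
      rw [h2]
      nlinarith [mul_nonneg (pow_pos hs 3).le hL0,
        mul_le_mul_of_nonneg_right ha04 hP.le]
    refine le_of_mul_le_mul_right ?_
      (show (0:ℝ) < (z - 1) ^ ν * (z - 2) ^ 2 * (z - 1) by positivity)
    have hlhs : Dp ν z * ((z - 1) ^ ν * (z - 2) ^ 2 * (z - 1))
        = ((z - 1) * Dp ν z) * ((z - 1) ^ ν * (z - 2) ^ 2) := by ring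
    rw [hlhs, h1]
    have hz1 : z - 1 ≠ 0 := ne_of_gt ht0
    have hz2 : z - 2 ≠ 0 := ne_of_gt hs
    have hzz : z ≠ 0 := ne_of_gt hz0
    have hrhs : ((z - 2) / (z - 1)) * (z ^ 2 / (z - 1)) ^ ν *
        (1 + (z * (z - 1) / (z - 2) ^ 3) * (4 * (z - 1) / z ^ 2) ^ ν) *
        ((z - 1) ^ ν * (z - 2) ^ 2 * (z - 1))
        = (z - 2) ^ 3 * z ^ (2 * ν) + z * 4 ^ ν * (z - 1) * (z - 1) ^ ν := by
      rw [div_pow, div_pow, mul_pow, ← hQ]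
      field_simp
    rw [hrhs]
    exact key2
end

section
/- For every real z > 2, lim_{ν→∞} D_{2ν}(z)·((z−1)/z²)^ν = (z−2)/(z−1); equivalently, D_{2ν}(z) = ((z−2)/(z−1))·(z²/(z−1))^ν·(1+o(1)) as ν → ∞. -/
open Filter Real

-- ballot identity
lemma ballot (ν m : ℕ) :
    ((2 * (m : ℝ) + 1) / ((ν : ℝ) + m + 1)) * (Nat.choose (2 * ν) (ν + m)) =
      (Nat.choose (2 * ν) (ν + m) : ℝ) - (Nat.choose (2 * ν) (ν + m + 1) : ℝ) := by
  have hpos : ((ν : ℝ) + m + 1) ≠ 0 := by positivity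
  rw [div_mul_eq_mul_div, div_eq_iff hpos]
  have key : (Nat.choose (2 * ν) (ν + m + 1) : ℝ) * ((ν : ℝ) + m + 1)
      = (Nat.choose (2 * ν) (ν + m) : ℝ) * ((ν : ℝ) - m) := by
    rcases le_or_gt (ν + m + 1) (2 * ν) with h | h
    · have h2 : Nat.choose (2 * ν) (ν + m + 1) * (ν + m + 1)
          = Nat.choose (2 * ν) (ν + m) * (2 * ν - (ν + m)) :=
        Nat.choose_succ_right_eq (2 * ν) (ν + m)
      have hm : m ≤ ν := by omega
      have h3 : (2 * ν - (ν + m)) = ν - m := by omega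
      rw [h3] at h2
      have := congrArg (fun x : ℕ => (x : ℝ)) h2
      push_cast [Nat.cast_sub hm] at this
      linarith [this]
    · have h1 : Nat.choose (2 * ν) (ν + m + 1) = 0 := Nat.choose_eq_zero_of_lt h
      have h2 : Nat.choose (2 * ν) (ν + m) = 0 ∨ ν = m := by
        rcases Nat.lt_or_ge (2 * ν) (ν + m) with h' | h'
        · exact Or.inl (Nat.choose_eq_zero_of_lt h')
        · right; omega
      rcases h2 with h2 | h2
      · simp [h1, h2]
      · subst h2; rw [h1]; push_cast; ring
  nlinarith [key]

lemma Dp_eq (ν : ℕ) (z : ℝ) (hz : z - 1 ≠ 0) :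
    Dp ν z = (z - 2) / (z - 1) * Tp ν z + (Nat.choose (2 * ν) ν : ℝ) / (z - 1) := by
  have hD : Dp ν z = Tp ν z
      - ∑ m ∈ Finset.range (ν + 1), (Nat.choose (2 * ν) (ν + m + 1) : ℝ) * (z - 1) ^ m := by
    unfold Dp Tp
    rw [← Finset.sum_sub_distrib]
    refine Finset.sum_congr rfl fun m _ => ?_
    rw [ballot]; ring
  have hS : (z - 1) * (∑ m ∈ Finset.range (ν + 1),
      (Nat.choose (2 * ν) (ν + m + 1) : ℝ) * (z - 1) ^ m)
      = Tp ν z - (Nat.choose (2 * ν) ν : ℝ) := by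
    rw [Finset.mul_sum]
    have h1 : ∀ m : ℕ, (z - 1) * ((Nat.choose (2 * ν) (ν + m + 1) : ℝ) * (z - 1) ^ m)
        = (Nat.choose (2 * ν) (ν + (m + 1)) : ℝ) * (z - 1) ^ (m + 1) := by
      intro m; rw [show ν + (m + 1) = ν + m + 1 by ring]; ring
    rw [Finset.sum_congr rfl fun m _ => h1 m]
    rw [Finset.sum_range_succ]
    have h0 : Nat.choose (2 * ν) (ν + (ν + 1)) = 0 := by
      apply Nat.choose_eq_zero_of_lt; omega
    rw [h0]
    have h2 : Tp ν z = (∑ m ∈ Finset.range ν,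
        (Nat.choose (2 * ν) (ν + (m + 1)) : ℝ) * (z - 1) ^ (m + 1))
        + (Nat.choose (2 * ν) (ν + 0) : ℝ) * (z - 1) ^ 0 := by
      unfold Tp; rw [Finset.sum_range_succ']
    rw [h2]; simp
  rw [hD]
  have : (∑ m ∈ Finset.range (ν + 1),
      (Nat.choose (2 * ν) (ν + m + 1) : ℝ) * (z - 1) ^ m)
      = (Tp ν z - (Nat.choose (2 * ν) ν : ℝ)) / (z - 1) := by
    rw [eq_div_iff hz, mul_comm] at *; linarith [hS]
  rw [this]; field_simp; ring

lemma Tp_add_tail (ν : ℕ) (z : ℝ) :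
    Tp ν z * (z - 1) ^ ν + ∑ k ∈ Finset.range ν, (Nat.choose (2 * ν) k : ℝ) * (z - 1) ^ k
      = z ^ (2 * ν) := by
  have hz : z = (z - 1) + 1 := by ring
  have hpow : z ^ (2 * ν) = ∑ k ∈ Finset.range (2 * ν + 1),
      (Nat.choose (2 * ν) k : ℝ) * (z - 1) ^ k := by
    conv_lhs => rw [hz]
    rw [add_pow]
    refine Finset.sum_congr rfl fun k _ => ?_
    ring
  rw [hpow]
  have hsplit : ∑ k ∈ Finset.range (2 * ν + 1), (Nat.choose (2 * ν) k : ℝ) * (z - 1) ^ k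
      = (∑ k ∈ Finset.range ν, (Nat.choose (2 * ν) k : ℝ) * (z - 1) ^ k)
      + ∑ k ∈ Finset.Ico ν (2 * ν + 1), (Nat.choose (2 * ν) k : ℝ) * (z - 1) ^ k := by
    rw [Finset.range_eq_Ico,
      ← Finset.sum_Ico_consecutive _ (Nat.zero_le ν) (by omega : ν ≤ 2 * ν + 1)]
    rw [Finset.range_eq_Ico]
  rw [hsplit]
  have hIco : ∑ k ∈ Finset.Ico ν (2 * ν + 1), (Nat.choose (2 * ν) k : ℝ) * (z - 1) ^ k
      = Tp ν z * (z - 1) ^ ν := by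
    rw [Finset.sum_Ico_eq_sum_range]
    have : 2 * ν + 1 - ν = ν + 1 := by omega
    rw [this]
    unfold Tp
    rw [Finset.sum_mul]
    refine Finset.sum_congr rfl fun i _ => ?_
    rw [pow_add]; ring
  rw [hIco]; ring


/-- For `z > 2`, `D_{2ν}(z)·((z−1)/z²)^ν → (z−2)/(z−1)` as `ν → ∞`. -/
theorem dyck_partition_asymptotics (z : ℝ) (hz : 2 < z) :
    Tendsto (fun ν : ℕ => Dp ν z * ((z - 1) / z ^ 2) ^ ν) atTop (nhds ((z - 2) / (z - 1))) := by
  have hz0 : 0 < z := by linarith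
  have hw : (1:ℝ) < z - 1 := by linarith
  have hw0 : (0:ℝ) < z - 1 := by linarith
  have hzne : z - 1 ≠ 0 := by linarith
  have hz2 : (0:ℝ) < z ^ 2 := by positivity
  set c : ℝ := 4 * (z - 1) / z ^ 2 with hc
  have hc0 : 0 ≤ c := by positivity
  have hc1 : c < 1 := by rw [hc, div_lt_one hz2]; nlinarith
  have hcten : Tendsto (fun ν : ℕ => c ^ ν) atTop (nhds 0) :=
    tendsto_pow_atTop_nhds_zero_of_lt_one hc0 hc1
  have hchoose : ∀ ν k : ℕ, k ≤ 2 * ν → (Nat.choose (2 * ν) k : ℝ) ≤ 4 ^ ν := by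
    intro ν k hk
    have h1 : Nat.choose (2 * ν) k ≤ 2 ^ (2 * ν) := by
      calc Nat.choose (2 * ν) k ≤ ∑ i ∈ Finset.range (2 * ν + 1), Nat.choose (2 * ν) i :=
          Finset.single_le_sum (fun i _ => Nat.zero_le _) (Finset.mem_range.mpr (by omega))
        _ = 2 ^ (2 * ν) := Nat.sum_range_choose (2 * ν)
    calc (Nat.choose (2 * ν) k : ℝ) ≤ (2:ℝ) ^ (2 * ν) := by exact_mod_cast h1
      _ = 4 ^ ν := by rw [pow_mul]; norm_num
  have hr : ∀ ν : ℕ, ((z - 1) / z ^ 2) ^ ν = (z - 1) ^ ν / z ^ (2 * ν) := by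
    intro ν; rw [div_pow, ← pow_mul, mul_comm 2 ν]
  have hcν : ∀ ν : ℕ, c ^ ν = 4 ^ ν * (z - 1) ^ ν / z ^ (2 * ν) := by
    intro ν
    rw [hc, div_pow, mul_pow, ← pow_mul, mul_comm 2 ν]
  -- tail bounds
  have htail0 : ∀ ν : ℕ,
      0 ≤ ∑ k ∈ Finset.range ν, (Nat.choose (2 * ν) k : ℝ) * (z - 1) ^ k := by
    intro ν
    apply Finset.sum_nonneg
    intro k _; positivity
  have htail : ∀ ν : ℕ,
      (∑ k ∈ Finset.range ν, (Nat.choose (2 * ν) k : ℝ) * (z - 1) ^ k)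
        ≤ 4 ^ ν * (z - 1) ^ ν / (z - 2) := by
    intro ν
    have h1 : (∑ k ∈ Finset.range ν, (Nat.choose (2 * ν) k : ℝ) * (z - 1) ^ k)
        ≤ ∑ k ∈ Finset.range ν, (4:ℝ) ^ ν * (z - 1) ^ k := by
      apply Finset.sum_le_sum
      intro k hk
      have := hchoose ν k (by have := Finset.mem_range.mp hk; omega)
      have hpk : (0:ℝ) ≤ (z - 1) ^ k := by positivity
      exact mul_le_mul_of_nonneg_right this hpk
    have h2 : ∑ k ∈ Finset.range ν, (4:ℝ) ^ ν * (z - 1) ^ k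
        = 4 ^ ν * (((z - 1) ^ ν - 1) / (z - 1 - 1)) := by
      rw [← Finset.mul_sum, geom_sum_eq (by linarith : (z:ℝ) - 1 ≠ 1)]
    have h3 : (4:ℝ) ^ ν * (((z - 1) ^ ν - 1) / (z - 1 - 1))
        ≤ 4 ^ ν * (z - 1) ^ ν / (z - 2) := by
      rw [show z - 1 - 1 = z - 2 by ring, mul_div_assoc]
      gcongr
      · linarith
    linarith
  -- Tp limit
  have hTid : ∀ ν : ℕ, Tp ν z * ((z - 1) / z ^ 2) ^ ν
      = 1 - (∑ k ∈ Finset.range ν, (Nat.choose (2 * ν) k : ℝ) * (z - 1) ^ k) / z ^ (2 * ν) := by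
    intro ν
    have hzp : (0:ℝ) < z ^ (2 * ν) := by positivity
    have := Tp_add_tail ν z
    rw [hr]
    field_simp
    linarith [this]
  have hT : Tendsto (fun ν : ℕ => Tp ν z * ((z - 1) / z ^ 2) ^ ν) atTop (nhds 1) := by
    have hlow : Tendsto (fun ν : ℕ => 1 - c ^ ν / (z - 2)) atTop (nhds 1) := by
      have := (hcten.div_const (z - 2)).const_sub 1
      simpa using this
    apply tendsto_of_tendsto_of_tendsto_of_le_of_le hlow tendsto_const_nhds
    · intro ν
      dsimp only
      rw [hTid ν]
      have hzp : (0:ℝ) < z ^ (2 * ν) := by positivity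
      have h1 : (∑ k ∈ Finset.range ν, (Nat.choose (2 * ν) k : ℝ) * (z - 1) ^ k) / z ^ (2 * ν)
          ≤ 4 ^ ν * (z - 1) ^ ν / (z - 2) / z ^ (2 * ν) :=
        div_le_div_of_nonneg_right (htail ν) hzp.le
      have h2 : (4:ℝ) ^ ν * (z - 1) ^ ν / (z - 2) / z ^ (2 * ν) = c ^ ν / (z - 2) := by
        rw [hcν ν]; field_simp
      rw [h2] at h1
      linarith
    · intro ν
      dsimp only
      rw [hTid ν]
      have hzp : (0:ℝ) < z ^ (2 * ν) := by positivity
      have := div_nonneg (htail0 ν) (le_of_lt hzp)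
      linarith
  -- central binomial term limit
  have hC : Tendsto (fun ν : ℕ => (Nat.choose (2 * ν) ν : ℝ) / (z - 1) * ((z - 1) / z ^ 2) ^ ν)
      atTop (nhds 0) := by
    have hup : Tendsto (fun ν : ℕ => c ^ ν / (z - 1)) atTop (nhds 0) := by
      have := hcten.div_const (z - 1)
      simpa using this
    apply tendsto_of_tendsto_of_tendsto_of_le_of_le tendsto_const_nhds hup
    · intro ν
      have h1 : (0:ℝ) ≤ ((z - 1) / z ^ 2) ^ ν := by positivity
      have h2 : (0:ℝ) ≤ (Nat.choose (2 * ν) ν : ℝ) / (z - 1) := by positivity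
      exact mul_nonneg h2 h1
    · intro ν
      have h1 : (Nat.choose (2 * ν) ν : ℝ) ≤ 4 ^ ν := hchoose ν ν (by omega)
      have h2 : (0:ℝ) ≤ ((z - 1) / z ^ 2) ^ ν := by positivity
      have h3 : (Nat.choose (2 * ν) ν : ℝ) / (z - 1) * ((z - 1) / z ^ 2) ^ ν
          ≤ 4 ^ ν / (z - 1) * ((z - 1) / z ^ 2) ^ ν := by
        apply mul_le_mul_of_nonneg_right _ h2
        gcongr
      have h4 : (4:ℝ) ^ ν / (z - 1) * ((z - 1) / z ^ 2) ^ ν = c ^ ν / (z - 1) := by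
        rw [hcν ν, hr ν]; field_simp
      rw [h4] at h3
      exact h3
  -- combine
  have hfin := (hT.const_mul ((z - 2) / (z - 1))).add hC
  have heq : ∀ ν : ℕ, Dp ν z * ((z - 1) / z ^ 2) ^ ν
      = (z - 2) / (z - 1) * (Tp ν z * ((z - 1) / z ^ 2) ^ ν)
        + (Nat.choose (2 * ν) ν : ℝ) / (z - 1) * ((z - 1) / z ^ 2) ^ ν := by
    intro ν
    rw [Dp_eq ν z hzne]; ring
  simp only [mul_one, add_zero] at hfin
  refine hfin.congr fun ν => (heq ν).symm
end

section
/- At the critical adsorption point z = 2, for every a ∈ (0,1), the Dyck path pressure satisfies lim_{n→∞, n even} √n · P_n^D(2; 2⌊an/2⌋) = −√(2/(π·a·(1−a))). -/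
open Filter Real
open Topology Stirling

lemma Dp_two (ν : ℕ) : Dp ν 2 = ((2 * ν).choose ν : ℝ) := by
  have h : ∀ m ∈ Finset.range (ν + 1),
      ((2 * (m : ℝ) + 1) / ((ν : ℝ) + m + 1)) * ((2 * ν).choose (ν + m)) * ((2:ℝ) - 1) ^ m
        = (fun m => ((2 * ν).choose (ν + m) : ℝ)) m
          - (fun m => ((2 * ν).choose (ν + m) : ℝ)) (m + 1) := by
    intro m hm
    simp only [Finset.mem_range, Nat.lt_succ_iff] at hm
    have hkey := Nat.choose_succ_right_eq (2 * ν) (ν + m)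
    have h2 : 2 * ν - (ν + m) = ν - m := by omega
    rw [h2] at hkey
    have hkeyR : ((2 * ν).choose (ν + m + 1) : ℝ) * ((ν : ℝ) + m + 1)
        = ((2 * ν).choose (ν + m) : ℝ) * ((ν : ℝ) - m) := by
      have := congrArg (Nat.cast (R := ℝ)) hkey
      push_cast [Nat.cast_sub hm] at this
      convert this using 2 <;> push_cast <;> ring
    have hne : ((ν : ℝ) + m + 1) ≠ 0 := by positivity
    show ((2 * (m : ℝ) + 1) / ((ν : ℝ) + m + 1)) * ((2 * ν).choose (ν + m)) * ((2:ℝ) - 1) ^ m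
        = ((2 * ν).choose (ν + m) : ℝ) - ((2 * ν).choose (ν + (m + 1)) : ℝ)
    rw [show ν + (m + 1) = ν + m + 1 from rfl]
    norm_num
    field_simp
    linear_combination hkeyR
  rw [Dp, Finset.sum_congr rfl h, Finset.sum_range_sub']
  simp [Nat.choose_eq_zero_of_lt (by omega : 2 * ν < ν + (ν + 1))]

noncomputable def cbFun (n : ℕ) : ℝ := ((2 * n).choose n : ℝ) * Real.sqrt n / 4 ^ n

lemma cb_eq (n : ℕ) (hn : n ≠ 0) :
    cbFun n = stirlingSeq (2 * n) / (stirlingSeq n) ^ 2 := by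
  rw [cbFun]
  have hn0 : (0:ℝ) < n := by exact_mod_cast Nat.pos_of_ne_zero hn
  have hs : (0:ℝ) < Real.sqrt n := Real.sqrt_pos.2 hn0
  have hfacN : (2 * n).choose n * n.factorial * n.factorial = (2 * n).factorial := by
    have := Nat.choose_mul_factorial_mul_factorial (show n ≤ 2 * n by omega)
    have h2 : 2 * n - n = n := by omega
    rw [h2] at this; exact this
  have hfac : ((2 * n).choose n : ℝ) * (n.factorial : ℝ) * (n.factorial : ℝ)
      = ((2 * n).factorial : ℝ) := by exact_mod_cast congrArg (Nat.cast (R := ℝ)) hfacN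
  have hsqrt4 : Real.sqrt (2 * ((2 * n : ℕ) : ℝ)) = 2 * Real.sqrt n := by
    rw [show (2 * ((2 * n : ℕ) : ℝ)) = 4 * n by push_cast; ring,
      Real.sqrt_mul (by norm_num : (0:ℝ) ≤ 4),
      show Real.sqrt 4 = 2 by rw [show (4:ℝ) = 2 ^ 2 by norm_num, Real.sqrt_sq (by norm_num)]]
  have hsqrt2 : Real.sqrt (2 * (n:ℝ)) = Real.sqrt 2 * Real.sqrt n :=
    Real.sqrt_mul (by norm_num) _
  have hpow : (((2 * n : ℕ) : ℝ) / Real.exp 1) ^ (2 * n) = 4 ^ n * ((n / Real.exp 1) ^ n) ^ 2 := by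
    rw [show ((2 * n : ℕ) : ℝ) / Real.exp 1 = 2 * ((n : ℝ) / Real.exp 1) by push_cast; ring,
      mul_pow, pow_mul (2:ℝ), ← pow_mul ((n:ℝ)/Real.exp 1) n 2, Nat.mul_comm n 2]
    norm_num
  rw [stirlingSeq, stirlingSeq, hsqrt4, hsqrt2, hpow]
  have h1 : (n.factorial : ℝ) ≠ 0 := by positivity
  have h2 : ((n : ℝ) / Real.exp 1) ^ n ≠ 0 := by positivity
  have h3 : Real.sqrt 2 ≠ 0 := by positivity
  have h4 : (4:ℝ) ≠ 0 := by norm_num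
  have h5 : Real.sqrt n ≠ 0 := ne_of_gt hs
  have h2s : Real.sqrt 2 * Real.sqrt 2 = 2 := Real.mul_self_sqrt (by norm_num)
  field_simp
  linear_combination 2 * hfac - ((2 * n).factorial : ℝ) * h2s

lemma tendsto_cb : Tendsto cbFun atTop (𝓝 ((Real.sqrt π)⁻¹)) := by
  have h2n : Tendsto (fun n : ℕ => 2 * n) atTop atTop :=
    tendsto_atTop_mono (fun n => by simp; omega) tendsto_id
  have hA : Tendsto (fun n => stirlingSeq (2 * n)) atTop (𝓝 (Real.sqrt π)) :=
    tendsto_stirlingSeq_sqrt_pi.comp h2n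
  have hB : Tendsto (fun n : ℕ => (stirlingSeq n) ^ 2) atTop (𝓝 (Real.sqrt π ^ 2)) :=
    tendsto_stirlingSeq_sqrt_pi.pow 2
  have hπ : Real.sqrt π ^ 2 = π := Real.sq_sqrt pi_pos.le
  have hne : Real.sqrt π ^ 2 ≠ 0 := by rw [hπ]; exact pi_ne_zero
  have h := hA.div hB hne
  have hlim : Real.sqrt π / Real.sqrt π ^ 2 = (Real.sqrt π)⁻¹ := by
    have : Real.sqrt π ≠ 0 := by positivity
    rw [sq]
    field_simp
  rw [hlim] at h
  apply h.congr'
  filter_upwards [eventually_ne_atTop 0] with n hn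
  exact (cb_eq n hn).symm

lemma sqrt_ratio_id (k l n : ℕ) (hk : 0 < k) (hl : 0 < l) (hkl : k + l = n)
    (ck cl cn : ℝ) (hcn : cn ≠ 0) :
    ((ck * Real.sqrt k / 4 ^ k) * (cl * Real.sqrt l / 4 ^ l) / (cn * Real.sqrt n / 4 ^ n))
        * Real.sqrt (2 / (((k : ℝ) / n) * ((l : ℝ) / n)))
      = Real.sqrt (2 * n) * (ck * cl / cn) := by
  have hn : 0 < n := by omega
  have hk0 : (0:ℝ) < k := by exact_mod_cast hk
  have hl0 : (0:ℝ) < l := by exact_mod_cast hl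
  have hn0 : (0:ℝ) < n := by exact_mod_cast hn
  have hsk : (0:ℝ) < Real.sqrt k := Real.sqrt_pos.2 hk0
  have hsl : (0:ℝ) < Real.sqrt l := Real.sqrt_pos.2 hl0
  have hsn : (0:ℝ) < Real.sqrt n := Real.sqrt_pos.2 hn0
  have h1 : (2:ℝ) / (((k:ℝ)/n) * ((l:ℝ)/n)) = 2 * ((n:ℝ) * n) / ((k:ℝ) * l) := by
    field_simp
  have h2 : Real.sqrt (2 * ((n:ℝ) * n) / ((k:ℝ) * l))
      = Real.sqrt 2 * (n:ℝ) / (Real.sqrt k * Real.sqrt l) := by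
    rw [Real.sqrt_div (by positivity), Real.sqrt_mul (by norm_num : (0:ℝ) ≤ 2),
      Real.sqrt_mul_self hn0.le, Real.sqrt_mul hk0.le]
  have h3 : Real.sqrt (2 * (n:ℝ)) = Real.sqrt 2 * Real.sqrt n :=
    Real.sqrt_mul (by norm_num) _
  have h4n : (4:ℝ) ^ n = 4 ^ k * 4 ^ l := by rw [← pow_add, hkl]
  rw [h1, h2, h3, h4n]
  set s := Real.sqrt (n:ℝ) with hs
  have hnn : s * s = (n:ℝ) := Real.mul_self_sqrt hn0.le
  rw [← hnn]
  have h4k : (4:ℝ) ^ k ≠ 0 := by positivity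
  have h4l : (4:ℝ) ^ l ≠ 0 := by positivity
  have h2' : Real.sqrt 2 ≠ 0 := by positivity
  field_simp

/-- At the critical point `z = 2`, for `a ∈ (0,1)`,
`lim_{n→∞, n even} √n · P_n^D(2; 2⌊an/2⌋) = −√(2/(π·a·(1−a)))`. -/
theorem dyck_pressure_critical (a : ℝ) (ha0 : 0 < a) (ha1 : a < 1) :
    Tendsto (fun ν : ℕ => Real.sqrt (2 * (ν : ℝ)) * PD ν ⌊a * (ν : ℝ)⌋₊ 2) atTop
      (nhds (-Real.sqrt (2 / (π * a * (1 - a))))) := by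
  have ha1' : (0:ℝ) < 1 - a := by linarith
  set κ : ℕ → ℕ := fun ν => ⌊a * (ν : ℝ)⌋₊ with hκdef
  set r : ℕ → ℝ := fun ν =>
    ((2 * κ ν).choose (κ ν) : ℝ) * ((2 * (ν - κ ν)).choose (ν - κ ν) : ℝ)
      / ((2 * ν).choose ν : ℝ) with hrdef
  have hchoose : ∀ m : ℕ, (0:ℝ) < ((2 * m).choose m : ℝ) := fun m => by
    exact_mod_cast Nat.choose_pos (by omega)
  have hrpos : ∀ ν, 0 < r ν := fun ν =>
    div_pos (mul_pos (hchoose _) (hchoose _)) (hchoose _)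
  have hκle : ∀ ν : ℕ, κ ν ≤ ν := fun ν => by
    have h1 : a * (ν:ℝ) ≤ (ν:ℝ) := by
      nlinarith [Nat.cast_nonneg' (α := ℝ) ν, (Nat.cast_nonneg ν : (0:ℝ) ≤ ν)]
    calc κ ν ≤ ⌊(ν:ℝ)⌋₊ := Nat.floor_mono h1
    _ = ν := Nat.floor_natCast ν
  -- κ ν → ∞
  have hκtop : Tendsto κ atTop atTop := tendsto_nat_floor_mul_atTop a ha0
  -- κ ν / ν → a
  have hκν : Tendsto (fun ν : ℕ => (κ ν : ℝ) / ν) atTop (𝓝 a) :=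
    (tendsto_nat_floor_mul_div_atTop ha0.le).comp tendsto_natCast_atTop_atTop
  -- (ν - κ ν)/ν → 1 - a
  have hκν' : Tendsto (fun ν : ℕ => ((ν - κ ν : ℕ) : ℝ) / ν) atTop (𝓝 (1 - a)) := by
    have h : Tendsto (fun ν : ℕ => 1 - (κ ν : ℝ) / ν) atTop (𝓝 (1 - a)) :=
      (tendsto_const_nhds (x := (1:ℝ))).sub hκν
    apply h.congr'
    filter_upwards [eventually_ge_atTop 1] with ν hν
    have hν0 : ((ν:ℕ):ℝ) ≠ 0 := by positivity
    rw [Nat.cast_sub (hκle ν), sub_div, div_self hν0]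
  -- ν - κ ν → ∞
  have hδtop : Tendsto (fun ν : ℕ => ν - κ ν) atTop atTop := by
    rw [← tendsto_natCast_atTop_iff (R := ℝ)]
    apply tendsto_atTop_mono' _ _
      ((tendsto_natCast_atTop_atTop (R := ℝ)).const_mul_atTop ha1')
    filter_upwards [eventually_ge_atTop 1] with ν hν
    rw [Nat.cast_sub (hκle ν)]
    have := Nat.floor_le (by positivity : 0 ≤ a * (ν:ℝ))
    show (1 - a) * (ν:ℝ) ≤ (ν:ℝ) - (κ ν : ℝ)
    nlinarith [this]
  -- Q limit
  have hsπ : Real.sqrt π ≠ 0 := by positivity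
  have hQ : Tendsto (fun ν => cbFun (κ ν) * cbFun (ν - κ ν) / cbFun ν) atTop
      (𝓝 ((Real.sqrt π)⁻¹)) := by
    have h := ((tendsto_cb.comp hκtop).mul (tendsto_cb.comp hδtop)).div tendsto_cb
      (inv_ne_zero hsπ)
    have : (Real.sqrt π)⁻¹ * (Real.sqrt π)⁻¹ / (Real.sqrt π)⁻¹ = (Real.sqrt π)⁻¹ := by
      field_simp
    rwa [this] at h
  -- sqrt factor limit
  have hane : a * (1 - a) ≠ 0 := by positivity
  have hS : Tendsto (fun ν : ℕ =>
      Real.sqrt (2 / (((κ ν : ℝ) / ν) * (((ν - κ ν : ℕ) : ℝ) / ν)))) atTop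
      (𝓝 (Real.sqrt (2 / (a * (1 - a))))) :=
    (Real.continuous_sqrt.tendsto _).comp
      ((tendsto_const_nhds (x := (2:ℝ))).div (hκν.mul hκν') hane)
  -- main limit A
  have hA : Tendsto (fun ν : ℕ => Real.sqrt (2 * ν) * r ν) atTop
      (𝓝 (Real.sqrt (2 / (π * a * (1 - a))))) := by
    have hprod := hQ.mul hS
    have hconst : (Real.sqrt π)⁻¹ * Real.sqrt (2 / (a * (1 - a)))
        = Real.sqrt (2 / (π * a * (1 - a))) := by
      rw [← Real.sqrt_inv, ← Real.sqrt_mul (by positivity)]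
      congr 1
      field_simp
    rw [hconst] at hprod
    apply hprod.congr'
    filter_upwards [hκtop.eventually_ge_atTop 1, hδtop.eventually_ge_atTop 1] with ν h1 h2
    have hcn : ((2 * ν).choose ν : ℝ) ≠ 0 := (hchoose ν).ne'
    exact sqrt_ratio_id (κ ν) (ν - κ ν) ν h1 h2 (by omega) _ _ _ hcn
  -- r → 0
  have hsqrt_top : Tendsto (fun ν : ℕ => Real.sqrt (2 * ν)) atTop atTop := by
    have hsq : Tendsto Real.sqrt atTop atTop :=
      tendsto_atTop_atTop.2 fun b => ⟨max 0 b ^ 2, fun x hx => (le_max_right 0 b).trans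
        (by rw [← Real.sqrt_sq (le_max_left 0 b)]; exact Real.sqrt_le_sqrt hx)⟩
    exact hsq.comp ((tendsto_natCast_atTop_atTop (R := ℝ)).const_mul_atTop two_pos)
  have hB : Tendsto r atTop (𝓝 0) := by
    have h := hA.mul hsqrt_top.inv_tendsto_atTop
    rw [mul_zero] at h
    apply h.congr'
    filter_upwards [eventually_ge_atTop 1] with ν hν
    have : Real.sqrt (2 * ν) ≠ 0 := by
      have : (0:ℝ) < (ν:ℝ) := by exact_mod_cast hν
      positivity
    simp only [Pi.inv_apply]
    field_simp
  -- slope limit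
  have hd : HasDerivAt (fun x : ℝ => Real.log (1 - x)) (-1) 0 := by
    have h1 : HasDerivAt (fun x : ℝ => 1 - x) (-1) 0 := by
      simpa using (hasDerivAt_id' (0:ℝ)).const_sub 1
    have h2 := (Real.hasDerivAt_log (by norm_num : (1:ℝ) - 0 ≠ 0)).comp 0 h1
    simpa [Function.comp_def] using h2
  have hslope := hasDerivAt_iff_tendsto_slope.mp hd
  have hC : Tendsto (fun ν => Real.log (1 - r ν) / r ν) atTop (𝓝 (-1)) := by
    have hrne : ∀ᶠ ν in atTop, r ν ∈ ({(0:ℝ)}ᶜ : Set ℝ) :=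
      Eventually.of_forall fun ν => (hrpos ν).ne'
    have h := hslope.comp (tendsto_nhdsWithin_iff.mpr ⟨hB, hrne⟩)
    apply h.congr
    intro ν
    simp [slope_def_field, sub_zero, div_eq_mul_inv]
  -- conclude
  have hfinal := hA.mul hC
  rw [mul_neg_one] at hfinal
  apply hfinal.congr
  intro ν
  have hrne : r ν ≠ 0 := (hrpos ν).ne'
  show Real.sqrt (2 * ν) * r ν * (Real.log (1 - r ν) / r ν)
      = Real.sqrt (2 * ν) * PD ν (κ ν) 2
  rw [PD, Dp_two, Dp_two, Dp_two]
  rw [show ((2 * κ ν).choose (κ ν) : ℝ) * ((2 * (ν - κ ν)).choose (ν - κ ν) : ℝ)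
      / ((2 * ν).choose ν : ℝ) = r ν from rfl]
  field_simp
end
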